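/- arXiv:1107.0223 — 3 statements merged into one kernel-verified Lean document; each statement's English description precedes it below -/
import Mathlib

section
/- Assume b is an inner product on a real Hilbert space V, a is a symmetric bilinear form, and (λ, u), with b(u,u)=1, satisfies a(u,v)=λ b(u,v) for all v ∈ V. For ψ ∈ V with b(ψ,ψ)=1, the Rayleigh quotient λ̂ = a(ψ,ψ) satisfies |λ̂ − λ| ≤ C_a‖u−ψ‖_a² + |λ|‖u−ψ‖_b², where C_a is the continuity constant of a with respect to ‖·‖_a (C_a = 1) and ‖·‖_b = b(·,·)^{1/2}. -/
open scoped RealInnerProductSpace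

/-- Quantitative Rayleigh quotient error: `|λ̂ − λ| ≤ ‖u−ψ‖_a² + |λ|‖u−ψ‖_b²`
(with `C_a = 1` since `a` is the inner product of `V`). -/
theorem stmt_9 {V : Type*} [NormedAddCommGroup V] [InnerProductSpace ℝ V] [CompleteSpace V]
    (b : V → V → ℝ)
    (hb_add : ∀ x y z : V, b (x + y) z = b x z + b y z)
    (hb_smul : ∀ (c : ℝ) (x y : V), b (c • x) y = c * b x y)
    (hb_symm : ∀ x y : V, b x y = b y x)
    (hb_pos : ∀ w : V, w ≠ 0 → 0 < b w w)
    (lam : ℝ) (u ψ : V)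
    (hu : b u u = 1)
    (heig : ∀ v : V, ⟪u, v⟫ = lam * b u v)
    (hψ : b ψ ψ = 1) :
    |⟪ψ, ψ⟫ - lam| ≤ ⟪u - ψ, u - ψ⟫ + |lam| * b (u - ψ) (u - ψ) := by
  have hneg : ∀ x y : V, b (-x) y = - b x y := by
    intro x y
    have := hb_smul (-1) x y
    simpa using this
  have hsub : ∀ x y z : V, b (x - y) z = b x z - b y z := by
    intro x y z
    rw [sub_eq_add_neg, hb_add, hneg]; ring
  have hsubr : ∀ x y z : V, b x (y - z) = b x y - b x z := by
    intro x y z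
    rw [hb_symm, hsub, hb_symm y x, hb_symm z x]
  have hbexp : b (u - ψ) (u - ψ) = 1 - 2 * b u ψ + 1 := by
    rw [hsub, hsubr, hsubr, hu, hψ, hb_symm ψ u]; ring
  have haexp : ⟪u - ψ, u - ψ⟫ = lam - 2 * (lam * b u ψ) + ⟪ψ, ψ⟫ := by
    have hc : ⟪ψ, u⟫ = lam * b u ψ := (real_inner_comm u ψ).trans (heig ψ)
    rw [inner_sub_sub_self, heig u, heig ψ, hc, hu]
    ring
  have key : ⟪ψ, ψ⟫ - lam = ⟪u - ψ, u - ψ⟫ - lam * b (u - ψ) (u - ψ) := by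
    rw [haexp, hbexp]; ring
  have h1 : (0:ℝ) ≤ ⟪u - ψ, u - ψ⟫ := real_inner_self_nonneg
  have h2 : (0:ℝ) ≤ b (u - ψ) (u - ψ) := by
    rcases eq_or_ne (u - ψ) 0 with h | h
    · have h0 : b 0 0 = 0 := by have := hsub 0 0 0; simpa using this
      rw [h, h0]
    · exact (hb_pos _ h).le
  rw [key]
  calc |⟪u - ψ, u - ψ⟫ - lam * b (u - ψ) (u - ψ)|
      ≤ |⟪u - ψ, u - ψ⟫| + |lam * b (u - ψ) (u - ψ)| := abs_sub _ _
    _ = ⟪u - ψ, u - ψ⟫ + |lam| * b (u - ψ) (u - ψ) := by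
        rw [abs_of_nonneg h1, abs_mul, abs_of_nonneg h2]
end

section
/- Let V be a real Hilbert space with inner product a and norm ‖·‖_a, let b be an inner product on V, and suppose (λ, u) with b(u,u)=1 satisfies a(u,v) = λ b(u,v) for all v ∈ V, with λ > 0. For nonzero ψ ∈ V define λ̂ = a(ψ,ψ)/b(ψ,ψ). If in addition ‖·‖_b ≤ C‖·‖_a on V, then λ̂ ≤ λ + (1 + λC²)·‖u − ψ‖_a² / b(ψ,ψ). -/
open scoped RealInnerProductSpace

/-- Upper bound for the Rayleigh quotient of an approximate eigenfunction. -/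
theorem stmt_13 {V : Type*} [NormedAddCommGroup V] [InnerProductSpace ℝ V] [CompleteSpace V]
    (b : V → V → ℝ)
    (hb_add : ∀ x y z : V, b (x + y) z = b x z + b y z)
    (hb_smul : ∀ (c : ℝ) (x y : V), b (c • x) y = c * b x y)
    (hb_symm : ∀ x y : V, b x y = b y x)
    (hb_pos : ∀ w : V, w ≠ 0 → 0 < b w w)
    (C : ℝ) (hC : 0 < C)
    (hdom : ∀ v : V, b v v ≤ C ^ 2 * ‖v‖ ^ 2)
    (lam : ℝ) (hlam : 0 < lam) (u : V) (hu : b u u = 1)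
    (heig : ∀ v : V, ⟪u, v⟫ = lam * b u v)
    (ψ : V) (hψ : ψ ≠ 0) :
    ⟪ψ, ψ⟫ / b ψ ψ ≤ lam + (1 + lam * C ^ 2) * ‖u - ψ‖ ^ 2 / b ψ ψ := by
  have hbψ : 0 < b ψ ψ := hb_pos ψ hψ
  have hbneg : ∀ x y : V, b (-x) y = - b x y := by
    intro x y
    have := hb_smul (-1) x y
    simpa using this
  have hbsub : ∀ x y z : V, b (x - y) z = b x z - b y z := by
    intro x y z
    rw [sub_eq_add_neg, hb_add, hbneg, sub_eq_add_neg]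
  have hb_nonneg : ∀ w : V, 0 ≤ b w w := by
    intro w
    rcases eq_or_ne w 0 with h | h
    · subst h
      have := hb_smul 0 0 0
      simp at this
      simp [this]
    · exact (hb_pos w h).le
  -- expand b (u - ψ) (u - ψ)
  have hbexp : b (u - ψ) (u - ψ) = 1 - 2 * b u ψ + b ψ ψ := by
    rw [hbsub, hb_symm u (u - ψ), hb_symm ψ (u - ψ), hbsub, hbsub, hu, hb_symm ψ u]
    ring
  -- expand ‖u - ψ‖²
  have hnorm : ‖u - ψ‖ ^ 2 = lam - 2 * (lam * b u ψ) + ⟪ψ, ψ⟫ := by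
    have h1 : ‖u - ψ‖ ^ 2 = ⟪u - ψ, u - ψ⟫ := by
      rw [real_inner_self_eq_norm_sq]
    have h2 : ⟪ψ, u⟫ = lam * b u ψ := by rw [real_inner_comm, heig]
    rw [h1, inner_sub_sub_self, heig u, hu, h2, heig ψ]
    ring
  -- key inequality
  have key : ⟪ψ, ψ⟫ ≤ lam * b ψ ψ + ‖u - ψ‖ ^ 2 := by
    have h2 : lam * b ψ ψ + ‖u - ψ‖ ^ 2 - ⟪ψ, ψ⟫ = lam * b (u - ψ) (u - ψ) := by
      rw [hnorm, hbexp]; ring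
    nlinarith [mul_nonneg hlam.le (hb_nonneg (u - ψ))]
  have hmono : ‖u - ψ‖ ^ 2 ≤ (1 + lam * C ^ 2) * ‖u - ψ‖ ^ 2 := by
    nlinarith [sq_nonneg ‖u - ψ‖, sq_nonneg C, mul_nonneg hlam.le (sq_nonneg C)]
  have key2 : ⟪ψ, ψ⟫ ≤ lam * b ψ ψ + (1 + lam * C ^ 2) * ‖u - ψ‖ ^ 2 := by
    linarith
  rw [div_le_iff₀ hbψ] at *
  calc ⟪ψ, ψ⟫ ≤ lam * b ψ ψ + (1 + lam * C ^ 2) * ‖u - ψ‖ ^ 2 := key2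
    _ = (lam + (1 + lam * C ^ 2) * ‖u - ψ‖ ^ 2 / b ψ ψ) * b ψ ψ := by
        field_simp
end

section
/- Let V be a real Hilbert space with inner products a and b, with ‖v‖_b ≤ C‖v‖_a, and let (λ, u) be a weak eigenpair: a(u,v) = λ b(u,v) for all v ∈ V, b(u,u) = 1, λ > 0. Let u_h ∈ V satisfy ‖u − u_h‖_a ≤ ε with ε ≤ 1/(2C) (so b(u_h,u_h) ≥ 1/4 > 0), and define λ_h = a(u_h,u_h)/b(u_h,u_h). Then |λ_h − λ| ≤ 4(1 + λC²)ε². -/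
open scoped RealInnerProductSpace

/-- Step 4 of the Multi-level Correction Scheme: the Rayleigh quotient of the final corrected
eigenfunction has an eigenvalue error quadratic in the eigenfunction error. -/
theorem stmt_19 {V : Type*} [NormedAddCommGroup V] [InnerProductSpace ℝ V] [CompleteSpace V]
    (b : V → V → ℝ)
    (hb_add : ∀ x y z : V, b (x + y) z = b x z + b y z)
    (hb_smul : ∀ (c : ℝ) (x y : V), b (c • x) y = c * b x y)
    (hb_symm : ∀ x y : V, b x y = b y x)
    (hb_pos : ∀ w : V, w ≠ 0 → 0 < b w w)
    (C : ℝ) (hC : 0 < C)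
    (hdom : ∀ v : V, Real.sqrt (b v v) ≤ C * ‖v‖)
    (lam : ℝ) (hlam : 0 < lam) (u : V) (hu : b u u = 1)
    (heig : ∀ v : V, ⟪u, v⟫ = lam * b u v)
    (uh : V) (ε : ℝ) (herr : ‖u - uh‖ ≤ ε) (hε : ε ≤ 1 / (2 * C)) :
    |⟪uh, uh⟫ / b uh uh - lam| ≤ 4 * (1 + lam * C ^ 2) * ε ^ 2 := by
  have hε0 : 0 ≤ ε := le_trans (norm_nonneg _) herr
  obtain ⟨e, herr', huh⟩ : ∃ e, ‖e‖ ≤ ε ∧ uh = u - e := ⟨u - uh, herr, by abel⟩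
  subst huh
  have hbnn : ∀ x : V, 0 ≤ b x x := by
    intro x
    rcases eq_or_ne x 0 with h | h
    · have h0 : b x x = 0 := by
        rw [h]
        have := hb_smul 0 0 0
        simpa using this
      rw [h0]
    · exact (hb_pos x h).le
  have hb_smul' : ∀ (c : ℝ) (x y : V), b x (c • y) = c * b x y := by
    intro c x y; rw [hb_symm, hb_smul, hb_symm]
  have hb_sub : ∀ x y z : V, b (x - y) z = b x z - b y z := by
    intro x y z
    have h1 : x - y = x + (-1 : ℝ) • y := by module
    rw [h1, hb_add, hb_smul]; ring
  have hb_sub' : ∀ x y z : V, b x (y - z) = b x y - b x z := by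
    intro x y z; rw [hb_symm, hb_sub, hb_symm z x, hb_symm y x]
  rcases eq_or_ne e 0 with hez | hez
  · subst hez
    rw [sub_zero, heig u, hu]
    rw [mul_one, div_one, sub_self, abs_zero]
    positivity
  have hβpos : 0 < b e e := hb_pos e hez
  -- Cauchy-Schwarz : (b u e)^2 ≤ b e e (since b u u = 1)
  have hCS : (b u e) ^ 2 ≤ b e e := by
    have key := hbnn ((b e e) • u - (b u e) • e)
    simp only [hb_sub, hb_sub', hb_smul, hb_smul'] at key
    rw [hu, hb_symm e u] at key
    nlinarith [key, hβpos]
  -- bounds on ‖e‖^2 and b e e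
  have hne2 : ‖e‖ ^ 2 ≤ ε ^ 2 := by nlinarith [norm_nonneg e, herr']
  have hsq : Real.sqrt (b e e) ^ 2 = b e e := Real.sq_sqrt (hbnn e)
  have hβle : b e e ≤ C ^ 2 * ε ^ 2 := by
    nlinarith [hdom e, herr', Real.sqrt_nonneg (b e e), norm_nonneg e, hC, hsq]
  have hshalf : Real.sqrt (b e e) ≤ 1 / 2 := by
    have h2C : 2 * C * ε ≤ 1 := by
      rw [le_div_iff₀ (by positivity)] at hε
      linarith
    nlinarith [hdom e, herr', Real.sqrt_nonneg (b e e), norm_nonneg e, hC]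
  have hαs : b u e ≤ Real.sqrt (b e e) := by
    rcases le_or_gt (b u e) 0 with h | h
    · exact le_trans h (Real.sqrt_nonneg _)
    · nlinarith [Real.sqrt_nonneg (b e e), hsq, hCS]
  -- expansion of denominator and numerator
  have hDexp : b (u - e) (u - e) = 1 - 2 * b u e + b e e := by
    rw [hb_sub, hb_sub', hb_sub', hb_symm e u, hu]; ring
  have hD : 1 / 4 ≤ b (u - e) (u - e) := by
    rw [hDexp]
    nlinarith [hαs, hshalf, hsq, Real.sqrt_nonneg (b e e)]
  have hDpos : 0 < b (u - e) (u - e) := lt_of_lt_of_le (by norm_num) hD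
  have hDne : b (u - e) (u - e) ≠ 0 := ne_of_gt hDpos
  have hNexp : ⟪u - e, u - e⟫ = lam - 2 * (lam * b u e) + ‖e‖ ^ 2 := by
    rw [real_inner_sub_sub_self, heig u, heig e, hu, real_inner_self_eq_norm_sq]
    ring
  have hkey : ⟪u - e, u - e⟫ / b (u - e) (u - e) - lam
      = (‖e‖ ^ 2 - lam * b e e) / (b (u - e) (u - e)) := by
    rw [eq_div_iff hDne, sub_mul, div_mul_cancel₀ _ hDne, hNexp, hDexp]; ring
  rw [hkey, abs_div, abs_of_pos hDpos]
  have hnum : |‖e‖ ^ 2 - lam * b e e| ≤ (1 + lam * C ^ 2) * ε ^ 2 := by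
    rw [abs_le]
    constructor
    · nlinarith [hne2, hβle, hbnn e, sq_nonneg ε, hlam]
    · nlinarith [hne2, hβle, hbnn e, sq_nonneg ε, hlam]
  calc |‖e‖ ^ 2 - lam * b e e| / b (u - e) (u - e)
      ≤ ((1 + lam * C ^ 2) * ε ^ 2) / (1 / 4) :=
        div_le_div₀ (by positivity) hnum (by norm_num) hD
    _ = 4 * (1 + lam * C ^ 2) * ε ^ 2 := by ring
end
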